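/- arXiv:1108.2319 — 5 statements merged into one kernel-verified Lean document; each statement's English description precedes it below -/
import Mathlib

section
/- Let ν be a signed measure and μ a positive measure with |ν| ≤ μ, both supported outside an interval J. Let J₋, J₊ be the left and right halves of J and w a weight with w(J₋), w(J₊) > 0. Then |⟨Hν, h_J^w⟩_w| ≤ ⟨Hμ, h_J^w⟩_w, where Hν(x) = ∫ (x−y)^{-1} dν(y) and h_J^w is the weighted Haar function with the sign convention h_J^w = c(𝟙_{J₋}/w(J₋) − 𝟙_{J₊}/w(J₊)), c = sqrt(w(J₋)w(J₊)/w(J)). -/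
open MeasureTheory Set

/-- The Hilbert transform of a (positive) measure, `Hμ(x) = ∫ (x−y)⁻¹ dμ(y)`. -/
noncomputable def Htr (μ : Measure ℝ) (x : ℝ) : ℝ := ∫ y, (x - y)⁻¹ ∂μ

/-- The weighted Haar function on `J = [a,b)` with midpoint `m`, with the sign convention
`h_J^w = c (𝟙_{J₋}/w(J₋) − 𝟙_{J₊}/w(J₊))`, `c = sqrt(w(J₋)w(J₊)/w(J))`. -/
noncomputable def haarFn (w : Measure ℝ) (a m b : ℝ) : ℝ → ℝ := fun x =>
  Real.sqrt (((w (Ico a m)).toReal * (w (Ico m b)).toReal) / (w (Ico a b)).toReal) *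
    ((Ico a m).indicator (fun _ => ((w (Ico a m)).toReal)⁻¹) x
      - (Ico m b).indicator (fun _ => ((w (Ico m b)).toReal)⁻¹) x)

/-!
Write `ν = νp − νm`. Both `μ + ν = (μ + νp) − νm` and `μ − ν = (μ + νm) − νp` are differences
`σ − τ` of positive measures with `τ ≤ σ` and `σ` vanishing on `J`, so their Hilbert transforms
`Hσ − Hτ = ∫ (x − y)⁻¹ d(σ − τ)(y)` are decreasing on `J`. A function `g` decreasing on `J` pairs
nonnegatively with `h_J^w`: since `h_J^w` has `w`-mean zero, `⟨g, h_J^w⟩_w = ⟨g − g(m), h_J^w⟩_w`,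
and `(g − g(m)) h_J^w ≥ 0` pointwise because `h_J^w ≥ 0` on `J₋` and `h_J^w ≤ 0` on `J₊`.
Hence `⟨Hμ ± Hν, h_J^w⟩_w ≥ 0`.
-/

section Pairing

variable {α : Type*} [MeasurableSpace α] {μ : Measure α}

theorem integral_mul_nonneg_of_integral_eq_zero {g h : α → ℝ} (c : ℝ)
    (hgh : Integrable (fun x => g x * h x) μ) (hh : Integrable h μ) (hmean : ∫ x, h x ∂μ = 0)
    (hsign : ∀ x, 0 ≤ (g x - c) * h x) :
    0 ≤ ∫ x, g x * h x ∂μ := by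
  have hsplit : ∫ x, (g x - c) * h x ∂μ = ∫ x, g x * h x ∂μ - c * ∫ x, h x ∂μ := by
    simp only [sub_mul]
    rw [integral_sub hgh (hh.const_mul c), integral_const_mul]
  have : 0 ≤ ∫ x, (g x - c) * h x ∂μ := integral_nonneg hsign
  rwa [hsplit, hmean, mul_zero, sub_zero] at this

theorem integrable_indicator_toReal_inv (μ : Measure α) {s : Set α} (hs : MeasurableSet s) :
    Integrable (s.indicator fun _ => (μ s).toReal⁻¹) μ := by
  rw [integrable_indicator_iff hs]
  rcases eq_or_ne (μ s) ⊤ with h | h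
  · simp [h]
  · exact (integrableOn_const_iff (by simp)).2 (Or.inr h.lt_top)

end Pairing

section Haar

variable (w : Measure ℝ) {a m b x : ℝ}

theorem haarFn_nonneg_of_mem_left (hx : x ∈ Ico a m) : 0 ≤ haarFn w a m b x := by
  have hx' : x ∉ Ico m b := fun h => (not_le.2 hx.2) h.1
  simp only [haarFn, indicator_of_mem hx, indicator_of_notMem hx', sub_zero]
  positivity

theorem haarFn_nonpos_of_mem_right (hx : x ∈ Ico m b) : haarFn w a m b x ≤ 0 := by
  have hx' : x ∉ Ico a m := fun h => (not_le.2 h.2) hx.1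
  simp only [haarFn, indicator_of_mem hx, indicator_of_notMem hx', zero_sub, mul_neg,
    neg_nonpos]
  positivity

theorem haarFn_eq_zero_of_notMem (ham : a ≤ m) (hmb : m ≤ b) (hx : x ∉ Ico a b) :
    haarFn w a m b x = 0 := by
  rw [← Ico_union_Ico_eq_Ico ham hmb, mem_union, not_or] at hx
  simp only [haarFn, indicator_of_notMem hx.1, indicator_of_notMem hx.2, sub_zero, mul_zero]

theorem integrable_haarFn (a m b : ℝ) : Integrable (haarFn w a m b) w :=
  ((integrable_indicator_toReal_inv w measurableSet_Ico).sub
    (integrable_indicator_toReal_inv w measurableSet_Ico)).const_mul _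

theorem integral_haarFn (a m b : ℝ) : ∫ x, haarFn w a m b x ∂w = 0 := by
  simp only [haarFn]
  rw [integral_const_mul, integral_sub (integrable_indicator_toReal_inv w measurableSet_Ico)
    (integrable_indicator_toReal_inv w measurableSet_Ico), integral_indicator_const _
    measurableSet_Ico, integral_indicator_const _ measurableSet_Ico, measureReal_def,
    measureReal_def, smul_eq_mul, smul_eq_mul]
  -- if either half has (real) mass zero, the normalising constant vanishes
  rcases eq_or_ne (w (Ico a m)).toReal 0 with hl | hl
  · simp [hl]
  rcases eq_or_ne (w (Ico m b)).toReal 0 with hr | hr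
  · simp [hr]
  rw [mul_inv_cancel₀ hl, mul_inv_cancel₀ hr, sub_self, mul_zero]

theorem integral_mul_haarFn_nonneg (ham : a ≤ m) (hmb : m < b) {g : ℝ → ℝ}
    (hg : AntitoneOn g (Ico a b)) (hint : Integrable (fun x => g x * haarFn w a m b x) w) :
    0 ≤ ∫ x, g x * haarFn w a m b x ∂w := by
  have hmJ : m ∈ Ico a b := ⟨ham, hmb⟩
  refine integral_mul_nonneg_of_integral_eq_zero (g m) hint (integrable_haarFn w a m b)
    (integral_haarFn w a m b) fun x => ?_
  by_cases hl : x ∈ Ico a m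
  · exact mul_nonneg (sub_nonneg.2 (hg ⟨hl.1, hl.2.trans hmb⟩ hmJ hl.2.le))
      (haarFn_nonneg_of_mem_left w hl)
  by_cases hr : x ∈ Ico m b
  · exact mul_nonneg_of_nonpos_of_nonpos (sub_nonpos.2 (hg hmJ ⟨ham.trans hr.1, hr.2⟩ hr.1))
      (haarFn_nonpos_of_mem_right w hr)
  have hx : x ∉ Ico a b := by
    rw [← Ico_union_Ico_eq_Ico ham hmb.le, mem_union, not_or]
    exact ⟨hl, hr⟩
  rw [haarFn_eq_zero_of_notMem w ham hmb.le hx, mul_zero]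

end Haar

section Hilbert

variable {a b x : ℝ}

theorem Htr_add_measure {μ ν : Measure ℝ} (hμ : Integrable (fun y => (x - y)⁻¹) μ)
    (hν : Integrable (fun y => (x - y)⁻¹) ν) : Htr (μ + ν) x = Htr μ x + Htr ν x :=
  integral_add_measure hμ hν

theorem inv_sub_le_inv_sub_of_notMem_Icc {x' y : ℝ} (hx : x ∈ Icc a b) (hx' : x' ∈ Icc a b)
    (hxx' : x ≤ x') (hy : y ∉ Icc a b) : (x' - y)⁻¹ ≤ (x - y)⁻¹ := by
  rcases not_and_or.1 hy with hya | hyb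
  · exact inv_anti₀ (by linarith [hx.1, not_le.1 hya]) (by linarith)
  · exact (inv_le_inv_of_neg (by linarith [hx'.2, not_le.1 hyb])
      (by linarith [hx.2, not_le.1 hyb])).2 (by linarith)

theorem antitoneOn_Htr_sub {σ τ : Measure ℝ} (hle : τ ≤ σ) (hnull : σ (Icc a b) = 0)
    (hker : ∀ x ∈ Ico a b, Integrable (fun y => (x - y)⁻¹) σ) :
    AntitoneOn (fun x => Htr σ x - Htr τ x) (Ico a b) := by
  intro x hx x' hx' hxx'
  have hdiff : Integrable (fun y => (x - y)⁻¹ - (x' - y)⁻¹) σ := (hker x hx).sub (hker x' hx')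
  have hpos : 0 ≤ᵐ[σ] fun y => (x - y)⁻¹ - (x' - y)⁻¹ := by
    refine measure_mono_null (fun y hy => ?_) hnull
    by_contra hy'
    exact hy (sub_nonneg.2 (inv_sub_le_inv_sub_of_notMem_Icc (Ico_subset_Icc_self hx)
      (Ico_subset_Icc_self hx') hxx' hy'))
  have hmono := integral_mono_measure hle hpos hdiff
  rw [integral_sub ((hker x hx).mono_measure hle) ((hker x' hx').mono_measure hle),
    integral_sub (hker x hx) (hker x' hx')] at hmono
  simp only [Htr]
  linarith

end Hilbert

theorem integral_Htr_sub_mul_haarFn_le {ρ₁ ρ₂ μ w : Measure ℝ} {a m b : ℝ}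
    (ham : a ≤ m) (hmb : m < b) (hdom : ρ₁ + ρ₂ ≤ μ) (hsupp : μ (Icc a b) = 0)
    (hker : ∀ x ∈ Ico a b, Integrable (fun y => (x - y)⁻¹) μ)
    (hint : Integrable (fun x => (Htr ρ₁ x - Htr ρ₂ x) * haarFn w a m b x) w)
    (hintμ : Integrable (fun x => Htr μ x * haarFn w a m b x) w) :
    ∫ x, (Htr ρ₁ x - Htr ρ₂ x) * haarFn w a m b x ∂w ≤ ∫ x, Htr μ x * haarFn w a m b x ∂w := by
  have hρ₁ : ρ₁ ≤ μ := (Measure.le_add_right le_rfl).trans hdom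
  have hρ₂ : ρ₂ ≤ μ := (Measure.le_add_left le_rfl).trans hdom
  have hle : ρ₁ ≤ μ + ρ₂ := hρ₁.trans (Measure.le_add_right le_rfl)
  have hnull : (μ + ρ₂) (Icc a b) = 0 := by
    rw [Measure.add_apply, hsupp, zero_add]
    exact Measure.absolutelyContinuous_of_le hρ₂ hsupp
  have hkerσ : ∀ x ∈ Ico a b, Integrable (fun y => (x - y)⁻¹) (μ + ρ₂) :=
    fun x hx => (hker x hx).add_measure ((hker x hx).mono_measure hρ₂)
  have hpoint : ∀ x, (Htr (μ + ρ₂) x - Htr ρ₁ x) * haarFn w a m b x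
      = Htr μ x * haarFn w a m b x - (Htr ρ₁ x - Htr ρ₂ x) * haarFn w a m b x := by
    intro x
    by_cases hx : x ∈ Ico a b
    · rw [Htr_add_measure (hker x hx) ((hker x hx).mono_measure hρ₂)]
      ring
    · simp only [haarFn_eq_zero_of_notMem w ham hmb.le hx, mul_zero, sub_zero]
  have hnonneg := integral_mul_haarFn_nonneg w ham hmb (antitoneOn_Htr_sub hle hnull hkerσ)
    ((hintμ.sub hint).congr (Filter.Eventually.of_forall fun x => (hpoint x).symm))
  rw [integral_congr_ae (Filter.Eventually.of_forall hpoint), integral_sub hintμ hint] at hnonneg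
  linarith

theorem stmt4_general (νp νm μ w : Measure ℝ) (a m b : ℝ)
    (hdom : νp + νm ≤ μ) (hsupp : μ (Icc a b) = 0)
    (hm0 : w (Ico a m) ≠ 0)
    (hp0 : w (Ico m b) ≠ 0)
    (hker : ∀ x ∈ Ico a b, Integrable (fun y => (x - y)⁻¹) μ)
    (hint1 : Integrable (fun x => (Htr νp x - Htr νm x) * haarFn w a m b x) w)
    (hint2 : Integrable (fun x => Htr μ x * haarFn w a m b x) w) :
    |∫ x, (Htr νp x - Htr νm x) * haarFn w a m b x ∂w|
      ≤ ∫ x, Htr μ x * haarFn w a m b x ∂w := by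
  have ham : a ≤ m := (nonempty_Ico.1 (nonempty_of_measure_ne_zero hm0)).le
  have hmb : m < b := nonempty_Ico.1 (nonempty_of_measure_ne_zero hp0)
  have hneg : -∫ x, (Htr νp x - Htr νm x) * haarFn w a m b x ∂w
      = ∫ x, (Htr νm x - Htr νp x) * haarFn w a m b x ∂w := by
    rw [← integral_neg]
    simp only [← neg_mul, neg_sub]
  have hint1' : Integrable (fun x => (Htr νm x - Htr νp x) * haarFn w a m b x) w := by
    simpa only [Pi.neg_def, ← neg_mul, neg_sub] using hint1.neg
  rw [abs_le, neg_le, hneg]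
  exact ⟨integral_Htr_sub_mul_haarFn_le ham hmb (add_comm νm νp ▸ hdom) hsupp hker hint1' hint2,
    integral_Htr_sub_mul_haarFn_le ham hmb hdom hsupp hker hint1 hint2⟩

/-- Monotonicity: if the signed measure `ν = νp − νm` satisfies `|ν| ≤ μ` and both are
supported outside `J`, then `|⟨Hν, h_J^w⟩_w| ≤ ⟨Hμ, h_J^w⟩_w`. -/
theorem stmt4 (νp νm μ w : Measure ℝ) (a m b : ℝ) (hab : a < b) (hm : m = (a + b) / 2)
    (hdom : νp + νm ≤ μ) (hsupp : μ (Icc a b) = 0)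
    (hm0 : w (Ico a m) ≠ 0) (hmT : w (Ico a m) ≠ ⊤)
    (hp0 : w (Ico m b) ≠ 0) (hpT : w (Ico m b) ≠ ⊤)
    (hker : ∀ x ∈ Ico a b, Integrable (fun y => (x - y)⁻¹) μ)
    (hint1 : Integrable (fun x => (Htr νp x - Htr νm x) * haarFn w a m b x) w)
    (hint2 : Integrable (fun x => Htr μ x * haarFn w a m b x) w) :
    |∫ x, (Htr νp x - Htr νm x) * haarFn w a m b x ∂w|
      ≤ ∫ x, Htr μ x * haarFn w a m b x ∂w :=
  stmt4_general νp νm μ w a m b hdom hsupp hm0 hp0 hker hint1 hint2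
end

section
/- Let μ be a positive measure supported on ℝ \ I for an interval I, and let J ⊂ I be an interval whose distance to the complement of I is at least d > 0, with d ≥ |J|. If c_J is the center of J, then for all x ∈ J: |Hμ(x) − Hμ(c_J) − (x − c_J)·(DHμ)(c_J)| ≤ C (|J|/d) · P(μ, J), where DHμ(z) = −∫ (z−y)^{-2} dμ(y), P(μ,J) = ∫ |J|·(|J| + dist(y,J))^{-2} dμ(y), and C is an absolute constant. -/
open MeasureTheory Set

/-- The derivative of the Hilbert transform, `DHμ(z) = −∫ (z−y)⁻² dμ(y)`. -/
noncomputable def DHtr (μ : Measure ℝ) (z : ℝ) : ℝ := -∫ y, (((z - y) ^ 2)⁻¹) ∂μ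

/-- The Poisson integral `P(μ,J) = ∫ |J| (|J| + dist(y,J))⁻² dμ(y)` for `J = [a,b]`. -/
noncomputable def PoisR (μ : Measure ℝ) (a b : ℝ) : ℝ :=
  ∫ y, (b - a) * (((b - a) + Metric.infDist y (Icc a b)) ^ 2)⁻¹ ∂μ

lemma key_pointwise (a b d x y : ℝ) (hab : a < b) (hd : 0 < d) (hbd : b - a ≤ d)
    (hx : x ∈ Icc a b) (hyx : d ≤ |y - x|) (hyc : d ≤ |y - (a + b) / 2|) :
    |(x - y)⁻¹ - ((a + b) / 2 - y)⁻¹ + (x - (a + b) / 2) * (((a + b) / 2 - y) ^ 2)⁻¹|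
      ≤ ((b - a) / d) * ((b - a) * (((b - a) + Metric.infDist y (Icc a b)) ^ 2)⁻¹) := by
  set c : ℝ := (a + b) / 2 with hc
  set e : ℝ := Metric.infDist y (Icc a b) with he
  have hcmem : c ∈ Icc a b := by constructor <;> simp only [hc] <;> linarith [hab.le]
  have hxy : x ≠ y := by
    intro h; rw [h] at hyx; simp at hyx; linarith
  have hcy : c ≠ y := by
    intro h; rw [h] at hyc; simp at hyc; linarith
  have he0 : 0 ≤ e := Metric.infDist_nonneg
  have hele : e ≤ |c - y| := by
    rw [abs_sub_comm]
    calc e ≤ dist y c := Metric.infDist_le_dist_of_mem hcmem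
    _ = |y - c| := by rw [Real.dist_eq]
  have hdcy : d ≤ |c - y| := by rw [abs_sub_comm]; exact hyc
  have hba : b - a ≤ |c - y| := le_trans hbd hdcy
  have hid : (x - y)⁻¹ - (c - y)⁻¹ + (x - c) * ((c - y) ^ 2)⁻¹
      = (x - c) ^ 2 / ((c - y) ^ 2 * (x - y)) := by
    have h1 : x - y ≠ 0 := sub_ne_zero.mpr hxy
    have h2 : c - y ≠ 0 := sub_ne_zero.mpr hcy
    field_simp
    ring
  rw [hid, abs_div, abs_mul, abs_pow, sq_abs, abs_pow, sq_abs]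
  have hs : 0 < (b - a) + e := by linarith
  have hRHS : ((b - a) / d) * ((b - a) * (((b - a) + e) ^ 2)⁻¹)
      = (b - a) ^ 2 / (d * ((b - a) + e) ^ 2) := by
    field_simp
  rw [hRHS]
  have hcy2 : (0:ℝ) < (c - y) ^ 2 := by
    have := sub_ne_zero.mpr hcy
    positivity
  have hxyabs : (0:ℝ) < |x - y| := lt_of_lt_of_le hd (by rwa [abs_sub_comm])
  have hs2 : (0:ℝ) < ((b - a) + e) ^ 2 := pow_pos hs 2
  rw [div_le_div_iff₀ (mul_pos hcy2 hxyabs) (mul_pos hd hs2)]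
  have h1 : (x - c) ^ 2 ≤ (b - a) ^ 2 / 4 := by
    obtain ⟨h1, h2⟩ := hx
    have : |x - c| ≤ (b - a) / 2 := by
      rw [abs_le]; constructor <;> simp only [hc] <;> linarith
    nlinarith [abs_nonneg (x - c), sq_abs (x - c)]
  have h2 : ((b - a) + e) ^ 2 ≤ 4 * (c - y) ^ 2 := by
    have : (b - a) + e ≤ 2 * |c - y| := by linarith
    nlinarith [abs_nonneg (c - y), sq_abs (c - y)]
  have h3 : d ≤ |x - y| := by rwa [abs_sub_comm]
  have step1 : d * ((b - a) + e) ^ 2 ≤ |x - y| * (4 * (c - y) ^ 2) :=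
    mul_le_mul h3 h2 hs2.le hxyabs.le
  calc (x - c) ^ 2 * (d * ((b - a) + e) ^ 2)
      ≤ ((b - a) ^ 2 / 4) * (|x - y| * (4 * (c - y) ^ 2)) :=
        mul_le_mul h1 step1 (by positivity) (by positivity)
  _ = (b - a) ^ 2 * ((c - y) ^ 2 * |x - y|) := by ring

/-- First-order Taylor approximation of `Hμ` on `J ⊂ I`, with error `≲ (|J|/d) P(μ,J)`,
where `μ` is supported outside `I`, and `J` has distance at least `d ≥ |J|` from `ℝ∖I`. -/
theorem stmt6 : ∃ C : ℝ, 0 < C ∧ ∀ (μ : Measure ℝ) (A B a b d : ℝ),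
    A ≤ a → a < b → b ≤ B → 0 < d → b - a ≤ d →
    μ (Icc A B) = 0 →
    (∀ y ∉ Icc A B, ∀ x ∈ Icc a b, d ≤ |y - x|) →
    (∀ x ∈ Icc a b, Integrable (fun y => (x - y)⁻¹) μ) →
    Integrable (fun y => (b - a) * (((b - a) + Metric.infDist y (Icc a b)) ^ 2)⁻¹) μ →
    ∀ x ∈ Icc a b,
      |Htr μ x - Htr μ ((a + b) / 2) - (x - (a + b) / 2) * DHtr μ ((a + b) / 2)|
        ≤ C * ((b - a) / d) * PoisR μ a b := by
  refine ⟨1, one_pos, ?_⟩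
  intro μ A B a b d hAa hab hbB hd hbd hμ0 hdist hInt hPois x hx
  set c : ℝ := (a + b) / 2 with hc
  have hcmem : c ∈ Icc a b := by constructor <;> simp only [hc] <;> linarith [hab.le]
  have hae : ∀ᵐ y ∂μ, y ∉ Icc A B := by
    rw [ae_iff]
    convert hμ0 using 2
    ext y; simp
  -- integrability of the second-order kernel
  have hmeas : AEStronglyMeasurable (fun y => ((c - y) ^ 2)⁻¹) μ := by
    apply Measurable.aestronglyMeasurable
    exact ((measurable_const.sub measurable_id).pow_const 2).inv
  have hI3 : Integrable (fun y => ((c - y) ^ 2)⁻¹) μ := by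
    apply Integrable.mono' ((hPois.const_mul (4 / (b - a))))
    · exact hmeas
    · filter_upwards [hae] with y hy
      have hyc : d ≤ |y - c| := hdist y hy c hcmem
      have he0 : (0:ℝ) ≤ Metric.infDist y (Icc a b) := Metric.infDist_nonneg
      have hele : Metric.infDist y (Icc a b) ≤ |c - y| := by
        rw [abs_sub_comm]
        calc Metric.infDist y (Icc a b) ≤ dist y c := Metric.infDist_le_dist_of_mem hcmem
        _ = |y - c| := by rw [Real.dist_eq]
      have hdcy : d ≤ |c - y| := by rw [abs_sub_comm]; exact hyc
      have hba : b - a ≤ |c - y| := le_trans hbd hdcy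
      set e := Metric.infDist y (Icc a b)
      rw [Real.norm_eq_abs, abs_inv, abs_pow]
      have hs : 0 < (b - a) + e := by linarith
      have key : ((b - a) + e) ^ 2 ≤ 4 * |c - y| ^ 2 := by nlinarith
      have hba0 : (b - a) ≠ 0 := ne_of_gt (by linarith)
      have this1 : (|c - y| ^ 2)⁻¹ ≤ 4 * (((b - a) + e) ^ 2)⁻¹ := by
        have h4 : (4:ℝ) * (((b - a) + e) ^ 2)⁻¹ = (((b - a) + e) ^ 2 / 4)⁻¹ := by
          rw [inv_div]; ring
        rw [h4]
        apply inv_anti₀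
        · have := sq_nonneg ((b - a) + e); nlinarith
        · linarith
      calc (|c - y| ^ 2)⁻¹ ≤ 4 * (((b - a) + e) ^ 2)⁻¹ := this1
      _ = 4 / (b - a) * ((b - a) * (((b - a) + e) ^ 2)⁻¹) := by
            rw [← mul_assoc, div_mul_cancel₀ _ hba0]
  have hI1 := hInt x hx
  have hI2 := hInt c hcmem
  -- rewrite the LHS as a single integral
  have hrw : Htr μ x - Htr μ c - (x - c) * DHtr μ c
      = ∫ y, ((x - y)⁻¹ - (c - y)⁻¹ + (x - c) * ((c - y) ^ 2)⁻¹) ∂μ := by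
    have hI12 : Integrable (fun y => (x - y)⁻¹ - (c - y)⁻¹) μ := hI1.sub hI2
    have hI3' : Integrable (fun y => (x - c) * ((c - y) ^ 2)⁻¹) μ := hI3.const_mul (x - c)
    rw [integral_add hI12 hI3', integral_sub hI1 hI2, integral_const_mul]
    simp only [Htr, DHtr]
    ring
  rw [hrw]
  have hnorm : |∫ y, ((x - y)⁻¹ - (c - y)⁻¹ + (x - c) * ((c - y) ^ 2)⁻¹) ∂μ|
      ≤ ∫ y, ((b - a) / d) * ((b - a) * (((b - a) + Metric.infDist y (Icc a b)) ^ 2)⁻¹) ∂μ := by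
    rw [← Real.norm_eq_abs]
    apply norm_integral_le_of_norm_le (hPois.const_mul ((b - a) / d))
    filter_upwards [hae] with y hy
    rw [Real.norm_eq_abs]
    exact key_pointwise a b d x y hab hd hbd hx (hdist y hy x hx) (hdist y hy c hcmem)
  calc |∫ y, ((x - y)⁻¹ - (c - y)⁻¹ + (x - c) * ((c - y) ^ 2)⁻¹) ∂μ|
      ≤ ∫ y, ((b - a) / d) * ((b - a) * (((b - a) + Metric.infDist y (Icc a b)) ^ 2)⁻¹) ∂μ := hnorm
  _ = 1 * ((b - a) / d) * PoisR μ a b := by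
      rw [integral_const_mul]; unfold PoisR; ring
end

section
/- Let f ∈ L²(σ) be nonnegative and supported on an interval I₀ with σ(I₀) > 0. Define the stopping intervals 𝓕 recursively: 𝓕₀ = {I₀}, and for F ∈ 𝓕, its 𝓕-children are the maximal dyadic subintervals F' of F with E^σ_{F'}|f| > 4 E^σ_F |f|. Then, with γ(F) = E^σ_F |f|, one has ∑_{F∈𝓕} γ(F)² σ(F) ≤ C ‖f‖²_{L²(σ)} for an absolute constant C. -/
/-!
Write `γ(F) = E^σ_F f` and let `E_F = F \ ⋃ {F' : F' a child of F}`; the sets `E_F` are pairwise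
disjoint. Splitting `γ(F) σ(F) = ∫_F f = ∫_{E_F} f + ∑_{F' child of F} ∫_{F'} f`, the sum
`S = ∑_F γ(F)² σ(F)` becomes `∑_F γ(F) ∫_{E_F} f + ∑_{F' ≠ I₀} γ(parent F') ∫_{F'} f`.
AM-GM, `8 γ f ≤ γ² + 16 f²`, and the disjointness of the `E_F` bound the first part by
`S / 8 + 2 ‖f‖²`; the selection rule `4 γ(parent F') ≤ γ(F')` bounds the second by `S / 4`.
Hence `S ≤ 16/5 ‖f‖²` once `S` is finite.
-/

open MeasureTheory Set

/-- The average `E^σ_S f = σ(S)⁻¹ ∫_S f dσ`. -/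
noncomputable def avgOn (σ : Measure ℝ) (f : ℝ → ℝ) (S : Set ℝ) : ℝ :=
  ((σ S).toReal)⁻¹ * ∫ x in S, f x ∂σ

open Function
open scoped ENNReal NNReal

theorem ENNReal.two_mul_le_add_sq (a b : ℝ≥0∞) : 2 * a * b ≤ a ^ 2 + b ^ 2 := by
  rcases eq_or_ne a ⊤ with rfl | ha
  · simp
  rcases eq_or_ne b ⊤ with rfl | hb
  · simp
  lift a to ℝ≥0 using ha
  lift b to ℝ≥0 using hb
  exact_mod_cast _root_.two_mul_le_add_sq a b

structure IsStoppingTree {ι α : Type*} (root : ι) (par : ι → ι) (gen : ι → ℕ) (F : ι → Set α) :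
    Prop where
  subset_par : ∀ i, i ≠ root → F i ⊆ F (par i)
  gen_root : gen root = 0
  gen_par : ∀ i, i ≠ root → gen i = gen (par i) + 1
  disjoint_of_par_eq : ∀ i j, i ≠ j → par i = par j → Disjoint (F i) (F j)

namespace StoppingTree

variable {ι α : Type*} (root : ι) (par : ι → ι) (F : ι → Set α)

def children (i : ι) : Set ι := {j | j ≠ root ∧ par j = i}

def remainder (i : ι) : Set α := F i \ ⋃ j : children root par i, F j

variable {root par}

theorem tsum_tsum_children_le (G : ι → ℝ≥0∞) :
    ∑' i, ∑' j : children root par i, G j ≤ ∑' j, G j := by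
  rw [← ENNReal.tsum_sigma' (fun p : Σ i, children root par i => G p.2)]
  refine ENNReal.tsum_comp_le_tsum_of_injective (f := fun p : Σ i, children root par i => p.2.1)
    ?_ G
  rintro ⟨i, j, -, rfl⟩ ⟨i', j', -, rfl⟩ (rfl : j = j')
  rfl

end StoppingTree

namespace IsStoppingTree

open StoppingTree

variable {ι α : Type*} {root : ι} {par : ι → ι} {gen : ι → ℕ} {F : ι → Set α}

theorem ne_root_of_gen_ne_zero (hT : IsStoppingTree root par gen F) {i : ι} (hi : gen i ≠ 0) :
    i ≠ root := by
  rintro rfl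
  exact hi hT.gen_root

theorem eq_root_of_gen_eq_zero (hT : IsStoppingTree root par gen F) {i : ι} (hi : gen i = 0) :
    i = root := by
  by_contra h
  have := hT.gen_par i h
  omega

theorem gen_iterate_par (hT : IsStoppingTree root par gen F) {m : ℕ} {i : ι} (hm : m ≤ gen i) :
    gen (par^[m] i) = gen i - m := by
  induction m generalizing i with
  | zero => rfl
  | succ m ih =>
    have hpar := hT.gen_par i (hT.ne_root_of_gen_ne_zero (by omega))
    rw [iterate_succ_apply, ih (by omega)]
    omega

theorem subset_iterate_par (hT : IsStoppingTree root par gen F) {m : ℕ} {i : ι} (hm : m ≤ gen i) :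
    F i ⊆ F (par^[m] i) := by
  induction m generalizing i with
  | zero => rfl
  | succ m ih =>
    have hi := hT.ne_root_of_gen_ne_zero (i := i) (by omega)
    have hpar := hT.gen_par i hi
    exact (hT.subset_par i hi).trans (ih (by omega))

theorem subset_root (hT : IsStoppingTree root par gen F) (i : ι) : F i ⊆ F root := by
  have h := hT.subset_iterate_par (le_refl (gen i))
  rwa [hT.eq_root_of_gen_eq_zero (i := par^[gen i] i)
    (by rw [hT.gen_iterate_par le_rfl, Nat.sub_self])] at h

theorem disjoint_of_gen_eq (hT : IsStoppingTree root par gen F) {i j : ι} (hgen : gen i = gen j)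
    (hij : i ≠ j) : Disjoint (F i) (F j) := by
  induction hn : gen i generalizing i j with
  | zero => exact absurd ((hT.eq_root_of_gen_eq_zero hn).trans
      (hT.eq_root_of_gen_eq_zero (hgen ▸ hn)).symm) hij
  | succ n ih =>
    have hi := hT.ne_root_of_gen_ne_zero (i := i) (by omega)
    have hj := hT.ne_root_of_gen_ne_zero (i := j) (by omega)
    by_cases hp : par i = par j
    · exact hT.disjoint_of_par_eq i j hij hp
    · have := hT.gen_par i hi
      have := hT.gen_par j hj
      exact (ih (by omega) hp (by omega)).mono (hT.subset_par i hi) (hT.subset_par j hj)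

theorem iUnion_children_subset (hT : IsStoppingTree root par gen F) (i : ι) :
    ⋃ j : children root par i, F j ⊆ F i :=
  iUnion_subset fun ⟨j, hj, hpar⟩ => hpar ▸ hT.subset_par j hj

theorem pairwise_disjoint_children (hT : IsStoppingTree root par gen F) (i : ι) :
    Pairwise (Disjoint on fun j : children root par i => F j) :=
  fun j k hjk => hT.disjoint_of_par_eq j k (Subtype.coe_ne_coe.mpr hjk) (j.2.2.trans k.2.2.symm)

theorem disjoint_remainder_of_gen_lt (hT : IsStoppingTree root par gen F) {i j : ι}
    (hij : gen i < gen j) : Disjoint (remainder root par F i) (F j) := by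
  set c := par^[gen j - gen i - 1] j
  have hc : gen c = gen i + 1 := by rw [hT.gen_iterate_par (by omega)]; omega
  have hcroot := hT.ne_root_of_gen_ne_zero (i := c) (by omega)
  have hjc : F j ⊆ F c := hT.subset_iterate_par (by omega)
  by_cases hpar : par c = i
  · refine Disjoint.mono_right (hjc.trans ?_) disjoint_sdiff_left
    exact subset_iUnion (fun k : children root par i => F k) ⟨c, hcroot, hpar⟩
  · have := hT.gen_par c hcroot
    exact (hT.disjoint_of_gen_eq (by omega) (Ne.symm hpar)).mono sdiff_subset
      (hjc.trans (hT.subset_par c hcroot))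

theorem pairwise_disjoint_remainder (hT : IsStoppingTree root par gen F) :
    Pairwise (Disjoint on remainder root par F) := by
  intro i j hij
  rcases lt_trichotomy (gen i) (gen j) with h | h | h
  · exact (hT.disjoint_remainder_of_gen_lt h).mono_right sdiff_subset
  · exact (hT.disjoint_of_gen_eq h hij).mono sdiff_subset sdiff_subset
  · exact ((hT.disjoint_remainder_of_gen_lt h).mono_right sdiff_subset).symm

variable [MeasurableSpace α] {μ : Measure α}

theorem lintegral_eq_remainder_add_tsum_children [Countable ι]
    (hT : IsStoppingTree root par gen F) (hF : ∀ i, MeasurableSet (F i)) (f : α → ℝ≥0∞) (i : ι) :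
    ∫⁻ x in F i, f x ∂μ =
      ∫⁻ x in remainder root par F i, f x ∂μ + ∑' j : children root par i, ∫⁻ x in F j, f x ∂μ := by
  rw [← lintegral_iUnion (s := fun j : children root par i => F j) (fun j => hF j)
    (hT.pairwise_disjoint_children i),
    remainder, ← lintegral_union (.iUnion fun j : children root par i => hF j) disjoint_sdiff_left,
    sdiff_union_of_subset (hT.iUnion_children_subset i)]

theorem tsum_lintegral_remainder_le [Countable ι] (hT : IsStoppingTree root par gen F)
    (hF : ∀ i, MeasurableSet (F i)) (f : α → ℝ≥0∞) :
    ∑' i, ∫⁻ x in remainder root par F i, f x ∂μ ≤ ∫⁻ x, f x ∂μ := by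
  rw [← lintegral_iUnion (s := remainder root par F)
    (fun i => (hF i).diff (MeasurableSet.iUnion fun j => hF j)) hT.pairwise_disjoint_remainder]
  exact setLIntegral_le_lintegral _ _

variable {f : α → ℝ≥0∞} {γ : ι → ℝ≥0∞}

theorem tsum_mul_lintegral_remainder_le [Countable ι] (hT : IsStoppingTree root par gen F)
    (hF : ∀ i, MeasurableSet (F i)) :
    8 * ∑' i, γ i * ∫⁻ x in remainder root par F i, f x ∂μ ≤
      ∑' i, γ i ^ 2 * μ (F i) + 16 * ∫⁻ x, f x ^ 2 ∂μ := by
  have hpoint : ∀ i, 8 * (γ i * ∫⁻ x in remainder root par F i, f x ∂μ) ≤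
      γ i ^ 2 * μ (F i) + 16 * ∫⁻ x in remainder root par F i, f x ^ 2 ∂μ := fun i =>
    calc 8 * (γ i * ∫⁻ x in remainder root par F i, f x ∂μ)
        = 2 * γ i * (4 * ∫⁻ x in remainder root par F i, f x ∂μ) := by ring
      _ ≤ ∫⁻ x in remainder root par F i, 2 * γ i * (4 * f x) ∂μ := by
          grw [lintegral_const_mul_le 4]
          exact lintegral_const_mul_le _ _
      _ ≤ ∫⁻ x in remainder root par F i, (γ i ^ 2 + 16 * f x ^ 2) ∂μ := by
          refine lintegral_mono fun x => ?_
          convert ENNReal.two_mul_le_add_sq (γ i) (4 * f x) using 2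
          ring
      _ ≤ γ i ^ 2 * μ (F i) + 16 * ∫⁻ x in remainder root par F i, f x ^ 2 ∂μ := by
          rw [lintegral_add_left measurable_const, setLIntegral_const,
            lintegral_const_mul' _ _ (by simp)]
          gcongr
          exact sdiff_subset
  calc 8 * ∑' i, γ i * ∫⁻ x in remainder root par F i, f x ∂μ
      ≤ ∑' i, (γ i ^ 2 * μ (F i) + 16 * ∫⁻ x in remainder root par F i, f x ^ 2 ∂μ) := by
        rw [← ENNReal.tsum_mul_left]
        exact ENNReal.tsum_le_tsum hpoint
    _ ≤ ∑' i, γ i ^ 2 * μ (F i) + 16 * ∫⁻ x, f x ^ 2 ∂μ := by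
        rw [ENNReal.tsum_add, ENNReal.tsum_mul_left]
        gcongr
        exact hT.tsum_lintegral_remainder_le hF _

theorem tsum_tsum_children_mul_le
    (hγ : ∀ i, γ i * μ (F i) = ∫⁻ x in F i, f x ∂μ)
    (hsel : ∀ i, i ≠ root → 4 * γ (par i) ≤ γ i) :
    8 * ∑' i, ∑' j : children root par i, γ i * ∫⁻ x in F j, f x ∂μ ≤
      2 * ∑' i, γ i ^ 2 * μ (F i) := by
  have hpoint : ∀ i (j : children root par i),
      8 * (γ i * ∫⁻ x in F j, f x ∂μ) ≤ 2 * (γ j ^ 2 * μ (F j)) := by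
    rintro i ⟨j, hj, rfl⟩
    calc 8 * (γ (par j) * ∫⁻ x in F j, f x ∂μ) = 2 * (4 * γ (par j) * (γ j * μ (F j))) := by
          rw [hγ]; ring
      _ ≤ 2 * (γ j * (γ j * μ (F j))) := by gcongr; exact hsel j hj
      _ = 2 * (γ j ^ 2 * μ (F j)) := by ring
  calc 8 * ∑' i, ∑' j : children root par i, γ i * ∫⁻ x in F j, f x ∂μ
      ≤ ∑' i, ∑' j : children root par i, 2 * (γ j ^ 2 * μ (F j)) := by
        simp_rw [← ENNReal.tsum_mul_left]
        exact ENNReal.tsum_le_tsum fun i => ENNReal.tsum_le_tsum (hpoint i)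
    _ ≤ 2 * ∑' i, γ i ^ 2 * μ (F i) := by
        rw [← ENNReal.tsum_mul_left]
        exact tsum_tsum_children_le _

theorem five_mul_tsum_sq_mul_le [Countable ι] (hT : IsStoppingTree root par gen F)
    (hF : ∀ i, MeasurableSet (F i))
    (hγ : ∀ i, γ i * μ (F i) = ∫⁻ x in F i, f x ∂μ)
    (hsel : ∀ i, i ≠ root → 4 * γ (par i) ≤ γ i)
    (hS : ∑' i, γ i ^ 2 * μ (F i) ≠ ⊤) :
    5 * ∑' i, γ i ^ 2 * μ (F i) ≤ 16 * ∫⁻ x, f x ^ 2 ∂μ := by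
  set S := ∑' i, γ i ^ 2 * μ (F i)
  have hsplit : S = ∑' i, γ i * ∫⁻ x in remainder root par F i, f x ∂μ +
      ∑' i, ∑' j : children root par i, γ i * ∫⁻ x in F j, f x ∂μ := by
    rw [← ENNReal.tsum_add]
    refine tsum_congr fun i => ?_
    rw [sq, mul_assoc, hγ, hT.lintegral_eq_remainder_add_tsum_children hF, mul_add,
      ENNReal.tsum_mul_left]
  have h8 : 3 * S + 5 * S ≤ 3 * S + 16 * ∫⁻ x, f x ^ 2 ∂μ :=
    calc 3 * S + 5 * S
        = 8 * ∑' i, γ i * ∫⁻ x in remainder root par F i, f x ∂μ +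
          8 * ∑' i, ∑' j : children root par i, γ i * ∫⁻ x in F j, f x ∂μ := by
          rw [← mul_add, ← hsplit]; ring
      _ ≤ (S + 16 * ∫⁻ x, f x ^ 2 ∂μ) + 2 * S :=
        add_le_add (hT.tsum_mul_lintegral_remainder_le hF) (tsum_tsum_children_mul_le hγ hsel)
      _ = 3 * S + 16 * ∫⁻ x, f x ^ 2 ∂μ := by ring
  exact ENNReal.le_of_add_le_add_left (by finiteness) h8

end IsStoppingTree

theorem avgOn_nonneg {σ : Measure ℝ} {f : ℝ → ℝ} {S : Set ℝ} (hf : ∀ x, 0 ≤ f x) :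
    0 ≤ avgOn σ f S :=
  mul_nonneg (inv_nonneg.mpr ENNReal.toReal_nonneg) (integral_nonneg hf)

theorem ofReal_avgOn_mul_measure {σ : Measure ℝ} {f : ℝ → ℝ} {S : Set ℝ} (hf : ∀ x, 0 ≤ f x)
    (hfS : IntegrableOn f S σ) (hS : σ S ≠ ⊤) :
    ENNReal.ofReal (avgOn σ f S) * σ S = ∫⁻ x in S, ENNReal.ofReal (f x) ∂σ := by
  rcases eq_or_ne (σ S) 0 with h0 | h0
  · simp [h0, Measure.restrict_eq_zero.mpr h0]
  have hS' : (σ S).toReal ≠ 0 := ENNReal.toReal_ne_zero.mpr ⟨h0, hS⟩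
  rw [← ENNReal.ofReal_toReal hS, ← ENNReal.ofReal_mul' ENNReal.toReal_nonneg,
    ← ofReal_integral_eq_lintegral_ofReal hfS (ae_of_all _ hf), avgOn, mul_comm,
    mul_inv_cancel_left₀ hS']

theorem IsStoppingTree.tsum_avgOn_sq_mul_le {ι : Type*} [Countable ι] {root : ι} {par : ι → ι}
    {gen : ι → ℕ} {F : ι → Set ℝ} {σ : Measure ℝ} {f : ℝ → ℝ}
    (hT : IsStoppingTree root par gen F) (hF : ∀ i, MeasurableSet (F i))
    (hFfin : ∀ i, σ (F i) ≠ ⊤) (hf : ∀ x, 0 ≤ f x) (hfF : ∀ i, IntegrableOn f (F i) σ)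
    (hf2 : Integrable (fun x => f x ^ 2) σ)
    (hsel : ∀ i, i ≠ root → 4 * avgOn σ f (F (par i)) ≤ avgOn σ f (F i)) :
    ∑' i, avgOn σ f (F i) ^ 2 * (σ (F i)).toReal ≤ 16 / 5 * ∫ x, f x ^ 2 ∂σ := by
  have hterm : ∀ i, 0 ≤ avgOn σ f (F i) ^ 2 * (σ (F i)).toReal := fun i => by positivity
  by_cases hsum : Summable fun i => avgOn σ f (F i) ^ 2 * (σ (F i)).toReal
  swap
  · rw [tsum_eq_zero_of_not_summable hsum]
    exact mul_nonneg (by norm_num) (integral_nonneg fun x => sq_nonneg _)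
  have hS : ∑' i, ENNReal.ofReal (avgOn σ f (F i)) ^ 2 * σ (F i) =
      ENNReal.ofReal (∑' i, avgOn σ f (F i) ^ 2 * (σ (F i)).toReal) := by
    rw [ENNReal.ofReal_tsum_of_nonneg hterm hsum]
    refine tsum_congr fun i => ?_
    rw [ENNReal.ofReal_mul (sq_nonneg _), ENNReal.ofReal_pow (avgOn_nonneg hf),
      ENNReal.ofReal_toReal (hFfin i)]
  have hL : ∫⁻ x, ENNReal.ofReal (f x) ^ 2 ∂σ = ENNReal.ofReal (∫ x, f x ^ 2 ∂σ) := by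
    rw [ofReal_integral_eq_lintegral_ofReal hf2 (ae_of_all _ fun x => sq_nonneg _)]
    simp_rw [ENNReal.ofReal_pow (hf _)]
  have key := hT.five_mul_tsum_sq_mul_le (γ := fun i => ENNReal.ofReal (avgOn σ f (F i))) hF
    (fun i => ofReal_avgOn_mul_measure hf (hfF i) (hFfin i))
    (fun i hi => by
      rw [← ENNReal.ofReal_ofNat, ← ENNReal.ofReal_mul (by norm_num)]
      exact ENNReal.ofReal_le_ofReal (hsel i hi))
    (hS ▸ ENNReal.ofReal_ne_top)
  rw [hS, hL, ← ENNReal.ofReal_ofNat, ← ENNReal.ofReal_mul (by norm_num),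
    ← ENNReal.ofReal_ofNat, ← ENNReal.ofReal_mul (by norm_num),
    ENNReal.ofReal_le_ofReal_iff (by positivity)] at key
  linarith

/-- Quasi-orthogonality of the stopping data: for `f ≥ 0` supported on `I₀` and the
stopping tree `𝓕` built by the selection rule `E^σ_{F'}|f| > 4 E^σ_F |f|`,
one has `∑_{F∈𝓕} (E^σ_F f)² σ(F) ≤ C ‖f‖²_{L²(σ)}`. The tree is encoded by a countable
index set with a root, a parent map, a generation function, and disjoint siblings. -/
theorem stmt8 : ∃ C : ℝ, 0 < C ∧
    ∀ (σ : Measure ℝ) (ι : Type) (_ : Countable ι) (root : ι) (par : ι → ι) (gen : ι → ℕ)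
      (Fi : ι → Set ℝ) (f : ℝ → ℝ) (a b : ℝ),
      a < b → Fi root = Icc a b → σ (Icc a b) ≠ 0 → σ (Icc a b) ≠ ⊤ →
      (∀ i, MeasurableSet (Fi i)) →
      (∀ i, i ≠ root → Fi i ⊆ Fi (par i)) →
      gen root = 0 →
      (∀ i, i ≠ root → gen i = gen (par i) + 1) →
      (∀ i j, i ≠ j → par i = par j → Disjoint (Fi i) (Fi j)) →
      (∀ i, i ≠ root → 4 * avgOn σ f (Fi (par i)) < avgOn σ f (Fi i)) →
      (∀ x, 0 ≤ f x) → (∀ x, x ∉ Icc a b → f x = 0) → MemLp f 2 σ →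
      ∑' i, (avgOn σ f (Fi i)) ^ 2 * (σ (Fi i)).toReal ≤ C * ∫ x, (f x) ^ 2 ∂σ := by
  refine ⟨16 / 5, by norm_num, ?_⟩
  intro σ ι _ root par gen Fi f a b _ hroot _ hσ hFi hsub hgen_root hgen_par hsib hsel hf _ hf2
  have hT : IsStoppingTree root par gen Fi := ⟨hsub, hgen_root, hgen_par, hsib⟩
  have hFi_sub : ∀ i, Fi i ⊆ Icc a b := fun i => hroot ▸ hT.subset_root i
  have : IsFiniteMeasure (σ.restrict (Icc a b)) := isFiniteMeasure_restrict.mpr hσ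
  have hfIcc : IntegrableOn f (Icc a b) σ := (hf2.restrict _).integrable one_le_two
  exact hT.tsum_avgOn_sq_mul_le hFi (fun i => measure_ne_top_of_subset (hFi_sub i) hσ) hf
    (fun i => hfIcc.mono_set (hFi_sub i)) hf2.integrable_sq (fun i hi => (hsel i hi).le)
end

section
/- Let J ⊂ I ⊂ I' be intervals with |J| = 2^{-s}|I| and suppose dist(x, J) ≥ |I|^{1−ε}|J|^ε = 2^{s(1−ε)}|J| for all x ∈ I' \ I (goodness of J). Then the Poisson integral satisfies P(σ·𝟙_{I'\I}, J) ≤ C 2^{−s(1−2ε)} P(σ·𝟙_{I'}, I), where P(μ, K) = ∫ |K| (|K| + dist(x,K))^{-2} dμ(x) and C is an absolute constant. -/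
open MeasureTheory Set
open scoped ENNReal

/-- The Poisson integral `P(σ·𝟙_E, K) = ∫_E |K| (|K| + dist(x,K))⁻² dσ(x)` for
`K = [u,v]`, as an extended nonnegative real. -/
noncomputable def Pois (σ : Measure ℝ) (E : Set ℝ) (u v : ℝ) : ℝ≥0∞ :=
  ∫⁻ x in E, ENNReal.ofReal ((v - u) * (((v - u) + Metric.infDist x (Icc u v)) ^ 2)⁻¹) ∂σ

/-- Poisson decay for good intervals: if `J ⊆ I ⊆ I'`, `|J| = 2^{-s}|I|`, and every point of
`I' ∖ I` is at distance at least `2^{s(1−ε)}|J|` from `J`, then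
`P(σ·𝟙_{I'∖I}, J) ≤ C 2^{−s(1−2ε)} P(σ·𝟙_{I'}, I)`. -/
theorem stmt11 : ∃ C : ℝ, 0 < C ∧
    ∀ (σ : Measure ℝ) (ε : ℝ) (s : ℕ) (aJ bJ aI bI aI' bI' : ℝ),
      0 < ε → ε < 1 / 2 → 1 ≤ s →
      aI' ≤ aI → aI ≤ aJ → aJ < bJ → bJ ≤ bI → bI ≤ bI' →
      bJ - aJ = 2 ^ (-(s : ℝ)) * (bI - aI) →
      (∀ x ∈ Icc aI' bI' \ Icc aI bI,
        2 ^ ((s : ℝ) * (1 - ε)) * (bJ - aJ) ≤ Metric.infDist x (Icc aJ bJ)) →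
      Pois σ (Icc aI' bI' \ Icc aI bI) aJ bJ
        ≤ ENNReal.ofReal (C * 2 ^ (-(s : ℝ) * (1 - 2 * ε))) * Pois σ (Icc aI' bI') aI bI := by
  refine ⟨4, by norm_num, ?_⟩
  intro σ ε s aJ bJ aI bI aI' bI' hε hε2 hs h1 h2 h3 h4 h5 hlen hgood
  set t : ℝ := (s : ℝ) with ht_def
  have ht : 0 ≤ t := Nat.cast_nonneg s
  have hL : 0 < bJ - aJ := by linarith
  have hMeq : bI - aI = 2 ^ t * (bJ - aJ) := by
    rw [hlen, ← mul_assoc, ← Real.rpow_add (by norm_num)]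
    simp
  have hM : 0 < bI - aI := by
    rw [hMeq]
    exact mul_pos (Real.rpow_pos_of_pos (by norm_num) _) hL
  set c : ℝ := 4 * 2 ^ (-t * (1 - 2 * ε)) with hc_def
  have hc0 : 0 < c := by positivity
  have key : ∀ x ∈ Icc aI' bI' \ Icc aI bI,
      (bJ - aJ) * (((bJ - aJ) + Metric.infDist x (Icc aJ bJ)) ^ 2)⁻¹
        ≤ c * ((bI - aI) * (((bI - aI) + Metric.infDist x (Icc aI bI)) ^ 2)⁻¹) := by
    intro x hx
    have hdJ := hgood x hx
    set dJ := Metric.infDist x (Icc aJ bJ) with hdJ_def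
    set dI := Metric.infDist x (Icc aI bI) with hdI_def
    have hdI0 : 0 ≤ dI := Metric.infDist_nonneg
    have hsub : Icc aJ bJ ⊆ Icc aI bI := Icc_subset_Icc h2 h4
    have hdIJ : dI ≤ dJ :=
      Metric.infDist_le_infDist_of_subset hsub ⟨aJ, le_refl aJ, le_of_lt h3⟩
    set A : ℝ := 2 ^ (t * ε) with hA_def
    have hA1 : 1 ≤ A := by
      have := Real.rpow_le_rpow_of_exponent_le (by norm_num : (1:ℝ) ≤ 2)
        (by positivity : (0:ℝ) ≤ t * ε)
      simpa using this
    have hA0 : 0 < A := lt_of_lt_of_le one_pos hA1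
    have hdJ0 : 0 < dJ := lt_of_lt_of_le (by positivity) hdJ
    -- M ≤ A * dJ
    have hMdJ : bI - aI ≤ A * dJ := by
      have h2t : 2 ^ t = A * 2 ^ (t * (1 - ε)) := by
        rw [hA_def, ← Real.rpow_add (by norm_num)]
        ring_nf
      calc bI - aI = A * (2 ^ (t * (1 - ε)) * (bJ - aJ)) := by
            rw [hMeq, h2t]; ring
        _ ≤ A * dJ := by
            apply mul_le_mul_of_nonneg_left hdJ (le_of_lt hA0)
    have e1 : (bI - aI) + dI ≤ 2 * A * dJ := by nlinarith
    have hcA : c * (bI - aI) = 4 * A ^ 2 * (bJ - aJ) := by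
      rw [hc_def, hMeq, hA_def]
      have : (2:ℝ) ^ (-t * (1 - 2 * ε)) * 2 ^ t = 2 ^ (t * ε) * 2 ^ (t * ε) := by
        rw [← Real.rpow_add (by norm_num), ← Real.rpow_add (by norm_num)]
        ring_nf
      nlinarith [this]
    have hdiv : (bJ - aJ) / ((bJ - aJ) + dJ) ^ 2
        ≤ (c * (bI - aI)) / ((bI - aI) + dI) ^ 2 := by
      rw [div_le_div_iff₀ (by positivity) (by positivity), hcA]
      have e2 : (bI - aI) + dI ≤ 2 * A * ((bJ - aJ) + dJ) := by nlinarith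
      have e3 : ((bI - aI) + dI) ^ 2 ≤ (2 * A * ((bJ - aJ) + dJ)) ^ 2 :=
        pow_le_pow_left₀ (by positivity) e2 2
      calc (bJ - aJ) * ((bI - aI) + dI) ^ 2
          ≤ (bJ - aJ) * (2 * A * ((bJ - aJ) + dJ)) ^ 2 :=
            mul_le_mul_of_nonneg_left e3 hL.le
        _ = 4 * A ^ 2 * (bJ - aJ) * ((bJ - aJ) + dJ) ^ 2 := by ring
    calc (bJ - aJ) * (((bJ - aJ) + dJ) ^ 2)⁻¹ = (bJ - aJ) / ((bJ - aJ) + dJ) ^ 2 := by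
          rw [div_eq_mul_inv]
      _ ≤ (c * (bI - aI)) / ((bI - aI) + dI) ^ 2 := hdiv
      _ = c * ((bI - aI) * (((bI - aI) + dI) ^ 2)⁻¹) := by
          rw [div_eq_mul_inv]; ring
  -- now the integral estimate
  have hEmeas : MeasurableSet (Icc aI' bI' \ Icc aI bI) :=
    measurableSet_Icc.diff measurableSet_Icc
  calc Pois σ (Icc aI' bI' \ Icc aI bI) aJ bJ
      ≤ ∫⁻ x in Icc aI' bI' \ Icc aI bI,
          ENNReal.ofReal (c * ((bI - aI) * (((bI - aI) + Metric.infDist x (Icc aI bI)) ^ 2)⁻¹)) ∂σ := by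
        refine lintegral_mono_ae ?_
        filter_upwards [ae_restrict_mem hEmeas] with x hx
        exact ENNReal.ofReal_le_ofReal (key x hx)
    _ = ENNReal.ofReal c * ∫⁻ x in Icc aI' bI' \ Icc aI bI,
          ENNReal.ofReal ((bI - aI) * (((bI - aI) + Metric.infDist x (Icc aI bI)) ^ 2)⁻¹) ∂σ := by
        rw [← lintegral_const_mul' _ _ ENNReal.ofReal_ne_top]
        congr 1 with x
        rw [ENNReal.ofReal_mul (le_of_lt hc0)]
    _ ≤ ENNReal.ofReal c * Pois σ (Icc aI' bI') aI bI := by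
        exact mul_le_mul_right (lintegral_mono_set diff_subset) _
end

section
/- Let I be an interval, σ a weight, w a weight, J an interval with 3I ∩ 3J = ∅ and |J| ≤ |I|, and let h be a function supported on J with ∫ h dw = 0 and ‖h‖_{L²(w)} = 1 (a unit mean-zero function). Then |⟨H(σ𝟙_I), h⟩_w| ≤ C σ(I) · w(J)^{1/2} |J| (|J| + dist(I,J))^{-2}, where H(σ𝟙_I)(x) = ∫_I (x−y)^{-1} dσ(y) and C is an absolute constant. -/
/-!
Since `∫ h dw = 0`, one may subtract from `H(σ𝟙_I)` its value at the centre `c` of `J`. For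
`x ∈ J` and `y ∈ I`, both `|x - y|` and `|c - y|` are at least the gap `d` between `I` and `J`, so
`|(x - y)⁻¹ - (c - y)⁻¹| ≤ |c - x| / d² ≤ |J| / (2 d²)`. Disjointness of `3I` and `3J` gives
`d > |I| + |J| ≥ |J|`, whence `d² ≥ (|J| + d)² / 4`. Integrating against `σ` on `I` and then
against `|h| dw` on `J`, Cauchy–Schwarz bounds `∫ |h| dw` by `w(J)^{1/2} ‖h‖_{L²(w)}`.
-/

open MeasureTheory Set

/-- The Hilbert transform of `σ` restricted to `I = [aI,bI]`:
`H(σ𝟙_I)(x) = ∫_I (x−y)⁻¹ dσ(y)`. -/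
noncomputable def HtrOn (σ : Measure ℝ) (aI bI : ℝ) (x : ℝ) : ℝ :=
  ∫ y in Icc aI bI, (x - y)⁻¹ ∂σ

lemma lt_or_lt_of_disjoint_Icc {a b c d : ℝ} (hab : a ≤ b) (hcd : c ≤ d)
    (h : Disjoint (Icc a b) (Icc c d)) : b < c ∨ d < a := by
  by_contra! hbc
  exact Set.disjoint_left.1 h (⟨le_max_left _ _, max_le hab hbc.1⟩ : max a c ∈ Icc a b)
    ⟨le_max_right _ _, max_le hbc.2 hcd⟩

lemma gap_of_disjoint_tripled {aI bI aJ bJ : ℝ} (hI : aI < bI) (hJ : aJ < bJ)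
    (hdisj : Disjoint (Icc (aI - (bI - aI)) (bI + (bI - aI)))
      (Icc (aJ - (bJ - aJ)) (bJ + (bJ - aJ)))) :
    (bI - aI) + (bJ - aJ) < max (aJ - bI) (aI - bJ) ∧
      ∀ x ∈ Icc aJ bJ, ∀ y ∈ Icc aI bI, max (aJ - bI) (aI - bJ) ≤ |x - y| := by
  rcases lt_or_lt_of_disjoint_Icc (by linarith) (by linarith) hdisj with hIJ | hJI
  · refine ⟨lt_max_of_lt_left (by linarith), fun x hx y hy => max_le ?_ ?_⟩
    · exact (by linarith [hx.1, hy.2] : aJ - bI ≤ x - y).trans (le_abs_self _)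
    · exact (by linarith : aI - bJ ≤ 0).trans (abs_nonneg _)
  · refine ⟨lt_max_of_lt_right (by linarith), fun x hx y hy => max_le ?_ ?_⟩
    · exact (by linarith : aJ - bI ≤ 0).trans (abs_nonneg _)
    · exact (by linarith [hx.2, hy.1] : aI - bJ ≤ -(x - y)).trans (neg_le_abs _)

lemma abs_inv_sub_inv_le {a b d : ℝ} (hd : 0 < d) (ha : d ≤ |a|) (hb : d ≤ |b|) :
    |a⁻¹ - b⁻¹| ≤ |b - a| / d ^ 2 := by
  have ha0 : a ≠ 0 := abs_pos.1 (hd.trans_le ha)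
  have hb0 : b ≠ 0 := abs_pos.1 (hd.trans_le hb)
  rw [inv_sub_inv ha0 hb0, abs_div, abs_mul, sq]
  gcongr

lemma integrableOn_inv_sub {σ : Measure ℝ} {s : Set ℝ} {x d : ℝ} (hs : MeasurableSet s)
    (hσ : σ s ≠ ⊤) (hd : 0 < d) (hx : ∀ y ∈ s, d ≤ |x - y|) :
    IntegrableOn (fun y => (x - y)⁻¹) s σ := by
  refine Measure.integrableOn_of_bounded hσ (by fun_prop) (M := d⁻¹) ?_
  filter_upwards [ae_restrict_mem hs] with y hy
  rw [Real.norm_eq_abs, abs_inv]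
  exact inv_anti₀ hd (hx y hy)

lemma abs_htrOn_sub_htrOn_le {σ : Measure ℝ} {aI bI x c d : ℝ} (hσ : σ (Icc aI bI) ≠ ⊤)
    (hd : 0 < d) (hx : ∀ y ∈ Icc aI bI, d ≤ |x - y|)
    (hc : ∀ y ∈ Icc aI bI, d ≤ |c - y|) :
    |HtrOn σ aI bI x - HtrOn σ aI bI c| ≤ |c - x| / d ^ 2 * σ.real (Icc aI bI) := by
  rw [HtrOn, HtrOn, ← integral_sub (integrableOn_inv_sub measurableSet_Icc hσ hd hx)
    (integrableOn_inv_sub measurableSet_Icc hσ hd hc), ← Real.norm_eq_abs]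
  refine norm_setIntegral_le_of_norm_le_const hσ.lt_top fun y hy => ?_
  simpa only [Real.norm_eq_abs, sub_sub_sub_cancel_right] using
    abs_inv_sub_inv_le hd (hx y hy) (hc y hy)

lemma stronglyMeasurable_htrOn {σ : Measure ℝ} {aI bI : ℝ} (hσ : σ (Icc aI bI) ≠ ⊤) :
    StronglyMeasurable (HtrOn σ aI bI) := by
  have : IsFiniteMeasure (σ.restrict (Icc aI bI)) := isFiniteMeasure_restrict.2 hσ
  exact (measurable_fst.sub measurable_snd).inv.stronglyMeasurable.integral_prod_right'

lemma abs_integral_mul_le_of_integral_eq_zero {α : Type*} [MeasurableSpace α] {μ : Measure α}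
    {s : Set α} {g h : α → ℝ} {b M : ℝ} (hg : AEStronglyMeasurable g μ)
    (hh : Integrable h μ) (hh0 : ∫ x, h x ∂μ = 0) (hsupp : ∀ x ∉ s, h x = 0)
    (hgb : ∀ x ∈ s, |g x - b| ≤ M) :
    |∫ x, g x * h x ∂μ| ≤ M * ∫ x, |h x| ∂μ := by
  have hbound : ∀ x, ‖(g x - b) * h x‖ ≤ M * |h x| := fun x => by
    by_cases hx : x ∈ s
    · rw [Real.norm_eq_abs, abs_mul]
      exact mul_le_mul_of_nonneg_right (hgb x hx) (abs_nonneg _)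
    · simp [hsupp x hx]
  have hint : Integrable (fun x => (g x - b) * h x) μ :=
    (hh.abs.const_mul M).mono' ((hg.sub aestronglyMeasurable_const).mul hh.1)
      (.of_forall hbound)
  have hsplit : ∫ x, g x * h x ∂μ = ∫ x, (g x - b) * h x ∂μ := by
    have : (fun x => g x * h x) = fun x => (g x - b) * h x + b * h x := by
      funext x; ring
    rw [this, integral_add hint (hh.const_mul b), integral_const_mul, hh0, mul_zero, add_zero]
  rw [hsplit, ← Real.norm_eq_abs, ← integral_const_mul]
  exact norm_integral_le_of_norm_le (hh.abs.const_mul M) (.of_forall hbound)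

lemma integral_abs_le_sqrt_measureReal_mul_sqrt {α : Type*} [MeasurableSpace α]
    {μ : Measure α} {s : Set α} {h : α → ℝ} (hμs : μ s ≠ ⊤)
    (hh : MemLp h 2 μ) (hsupp : ∀ x ∉ s, h x = 0) :
    ∫ x, |h x| ∂μ ≤ √(μ.real s) * √(∫ x, h x ^ 2 ∂μ) := by
  have : IsFiniteMeasure (μ.restrict s) := isFiniteMeasure_restrict.2 hμs
  have hpq := Real.HolderConjugate.two_two
  have holder := integral_mul_le_Lp_mul_Lq_of_nonneg (μ := μ.restrict s) hpq
    (.of_forall fun x => abs_nonneg (h x)) (.of_forall fun _ => zero_le_one)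
    (by rw [ENNReal.ofReal_ofNat]; exact (hh.restrict s).abs) (memLp_const (1 : ℝ))
  simp only [mul_one, one_pow, integral_const, smul_eq_mul, measureReal_restrict_apply_univ,
    Real.rpow_two, sq_abs, ← Real.sqrt_eq_rpow] at holder
  rw [setIntegral_eq_integral_of_forall_compl_eq_zero fun x hx => by simp [hsupp x hx],
    setIntegral_eq_integral_of_forall_compl_eq_zero fun x hx => by simp [hsupp x hx]] at holder
  rwa [mul_comm] at holder

lemma abs_htrOn_sub_htrOn_midpoint_le {σ : Measure ℝ} {aI bI aJ bJ : ℝ} (hI : aI < bI)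
    (hJ : aJ < bJ) (hdisj : Disjoint (Icc (aI - (bI - aI)) (bI + (bI - aI)))
      (Icc (aJ - (bJ - aJ)) (bJ + (bJ - aJ))))
    (hσ : σ (Icc aI bI) ≠ ⊤) {x : ℝ} (hx : x ∈ Icc aJ bJ) :
    |HtrOn σ aI bI x - HtrOn σ aI bI ((aJ + bJ) / 2)| ≤
      2 * ((bJ - aJ) * (((bJ - aJ) + max (aJ - bI) (aI - bJ)) ^ 2)⁻¹) * σ.real (Icc aI bI) := by
  obtain ⟨hgap, hdist⟩ := gap_of_disjoint_tripled hI hJ hdisj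
  generalize max (aJ - bI) (aI - bJ) = d at hgap hdist ⊢
  have hd : 0 < d := by linarith
  refine (abs_htrOn_sub_htrOn_le hσ hd (hdist x hx)
    (hdist _ ⟨by linarith, by linarith⟩)).trans ?_
  gcongr
  have hcx : |(aJ + bJ) / 2 - x| ≤ (bJ - aJ) / 2 :=
    abs_le.2 ⟨by linarith [hx.2], by linarith [hx.1]⟩
  have hsq : (bJ - aJ + d) ^ 2 ≤ (2 * d) ^ 2 := by gcongr; linarith
  rw [← div_eq_mul_inv, mul_div_assoc', div_le_div_iff₀ (by positivity) (by positivity)]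
  calc |(aJ + bJ) / 2 - x| * (bJ - aJ + d) ^ 2 ≤ (bJ - aJ) / 2 * (2 * d) ^ 2 :=
        mul_le_mul hcx hsq (sq_nonneg _) (by linarith)
    _ = 2 * (bJ - aJ) * d ^ 2 := by ring

/-- Tail estimate: for `3I ∩ 3J = ∅`, `|J| ≤ |I|`, and a unit mean-zero function `h`
supported on `J`, one has `|⟨H(σ𝟙_I), h⟩_w| ≤ C σ(I) w(J)^{1/2} |J| (|J|+dist(I,J))⁻²`. -/
theorem stmt15 : ∃ C : ℝ, 0 < C ∧
    ∀ (σ w : Measure ℝ) (aI bI aJ bJ : ℝ) (h : ℝ → ℝ),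
      aI < bI → aJ < bJ → bJ - aJ ≤ bI - aI →
      Disjoint (Icc (aI - (bI - aI)) (bI + (bI - aI)))
        (Icc (aJ - (bJ - aJ)) (bJ + (bJ - aJ))) →
      σ (Icc aI bI) ≠ ⊤ → w (Icc aJ bJ) ≠ ⊤ →
      Measurable h → (∀ x, x ∉ Icc aJ bJ → h x = 0) →
      MemLp h 2 w → (∫ x, h x ∂w) = 0 → (∫ x, (h x) ^ 2 ∂w) = 1 →
      |∫ x, HtrOn σ aI bI x * h x ∂w|
        ≤ C * (σ (Icc aI bI)).toReal * Real.sqrt (w (Icc aJ bJ)).toReal *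
            ((bJ - aJ) * (((bJ - aJ) + max (aJ - bI) (aI - bJ)) ^ 2)⁻¹) := by
  refine ⟨2, two_pos, ?_⟩
  intro σ w aI bI aJ bJ h hI hJ _ hdisj hσ hw _ hsupp hmem hmean hnorm
  have : IsFiniteMeasure (w.restrict (Icc aJ bJ)) := isFiniteMeasure_restrict.2 hw
  have hint : Integrable h w :=
    IntegrableOn.integrable_of_forall_notMem_eq_zero ((hmem.restrict _).integrable one_le_two)
      hsupp
  set K := 2 * ((bJ - aJ) * (((bJ - aJ) + max (aJ - bI) (aI - bJ)) ^ 2)⁻¹) *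
    σ.real (Icc aI bI)
  calc |∫ x, HtrOn σ aI bI x * h x ∂w|
      ≤ K * ∫ x, |h x| ∂w :=
        abs_integral_mul_le_of_integral_eq_zero (stronglyMeasurable_htrOn hσ).aestronglyMeasurable
          hint hmean hsupp fun x hx => abs_htrOn_sub_htrOn_midpoint_le hI hJ hdisj hσ hx
    _ ≤ K * (√(w.real (Icc aJ bJ)) * √(∫ x, h x ^ 2 ∂w)) := by
        gcongr
        exact integral_abs_le_sqrt_measureReal_mul_sqrt hw hmem hsupp
    _ = _ := by simp only [K, hnorm, Real.sqrt_one, measureReal_def]; ring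
end
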